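/- arXiv:1607.05674 — 4 statements merged into one kernel-verified Lean document; each statement's English description precedes it below -/
import Mathlib

section
/- Let 0 < γ < δ < 1 and let Λ be a symmetric family of pairwise inequivalent irreps of a compact group G. If there is a probability measure μ on G with a (δ,γ)-spectral gap with respect to Λ, then there is a complex Radon measure ν on G of total variation norm ‖ν‖ ≤ 2/δ such that ν̂(π) = I for every π ∈ Λ and ‖ν̂(ρ)‖ ≤ γ/δ for every irrep ρ of G not equivalent to a member of Λ (including the trivial irrep). -/
open MeasureTheory Matrix
open scoped ComplexOrder ENNReal

noncomputable section

instance matrixMeasurable {m n : Type*} : MeasurableSpace (Matrix m n ℂ) :=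
  inferInstanceAs (MeasurableSpace (m → n → ℂ))

/-- A (finite-dimensional, continuous, unitary) irreducible representation of a
topological group `G`. -/
structure Irrep (G : Type) [Group G] [TopologicalSpace G] where
  d : ℕ
  toFun : G →* Matrix.unitaryGroup (Fin d) ℂ
  continuous_toFun : Continuous fun g => ((toFun g : Matrix (Fin d) (Fin d) ℂ))
  irreducible : ∀ V : Submodule ℂ (Fin d → ℂ),
    (∀ (g : G), ∀ v ∈ V, Matrix.mulVec ((toFun g : Matrix (Fin d) (Fin d) ℂ)) v ∈ V) →
    V = ⊥ ∨ V = ⊤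

namespace Irrep

variable {G : Type} [Group G] [TopologicalSpace G]

/-- The matrix realization of an irrep. -/
def mat (ρ : Irrep G) (g : G) : Matrix (Fin ρ.d) (Fin ρ.d) ℂ :=
  (ρ.toFun g : Matrix (Fin ρ.d) (Fin ρ.d) ℂ)

lemma continuous_mat (ρ : Irrep G) : Continuous ρ.mat := ρ.continuous_toFun

/-- Unitary equivalence of the irrep `ρ` with a matrix-valued function `F`
(e.g. the matrix realization of another representation). -/
def EquivMat (ρ : Irrep G) {m : ℕ} (F : G → Matrix (Fin m) (Fin m) ℂ) : Prop :=
  ∃ (h : ρ.d = m) (U : Matrix (Fin m) (Fin m) ℂ),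
    U ∈ Matrix.unitaryGroup (Fin m) ℂ ∧
    ∀ g : G, U * (Matrix.reindex (finCongr h) (finCongr h) (ρ.mat g)) = F g * U

/-- Unitary equivalence of two irreps. -/
def Equiv (ρ₁ ρ₂ : Irrep G) : Prop := ρ₁.EquivMat ρ₂.mat

/-- `ρ` is nontrivial if it is not constantly the identity. -/
def IsNontrivial (ρ : Irrep G) : Prop := ∃ g, ρ.toFun g ≠ 1

end Irrep

/-- A family of pairwise inequivalent irreps. -/
def PairwiseInequiv {G : Type} [Group G] [TopologicalSpace G] {ι : Type}
    (π : ι → Irrep G) : Prop :=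
  ∀ i j, i ≠ j → ¬ (π i).Equiv (π j)

/-- A family of irreps is symmetric if the (entrywise) conjugate of each member is
equivalent to a member of the family. -/
def SymmetricFamily {G : Type} [Group G] [TopologicalSpace G] {ι : Type}
    (π : ι → Irrep G) : Prop :=
  ∀ i, ∃ j, (π j).EquivMat (fun g => ((π i).mat g).map (starRingEnd ℂ))

/-- The operator norm (on `ℓ₂`) of a complex matrix. -/
def opNorm {d : ℕ} (A : Matrix (Fin d) (Fin d) ℂ) : ℝ :=
  ‖LinearMap.toContinuousLinearMap (Matrix.toEuclideanLin A)‖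

/-- `tr|a|`, the trace of `(a* a)^{1/2}`, i.e. the sum of the singular values of `a`. -/
def traceAbs {d : ℕ} (A : Matrix (Fin d) (Fin d) ℂ) : ℝ :=
  (((Matrix.posSemidef_conjTranspose_mul_self A).1.eigenvectorUnitary.1 *
      Matrix.diagonal (fun i => ((Real.sqrt ((Matrix.posSemidef_conjTranspose_mul_self A).1.eigenvalues i) : ℝ) : ℂ)) *
      (star (Matrix.posSemidef_conjTranspose_mul_self A).1.eigenvectorUnitary :
        Matrix (Fin d) (Fin d) ℂ)).trace).re

/-- The Fourier coefficient `μ̂(ρ) = ∫ conj (ρ(t)) dμ(t)` of a (positive) measure `μ`. -/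
def fourierP {G : Type} [Group G] [TopologicalSpace G] [MeasurableSpace G]
    (μ : Measure G) (ρ : Irrep G) : Matrix (Fin ρ.d) (Fin ρ.d) ℂ :=
  Matrix.of fun i j => ∫ g, star (ρ.mat g i j) ∂μ

/-- The Fourier coefficient `μ̂(ρ)` of a complex Radon measure on a compact group,
the latter being encoded (via the Riesz representation theorem) as a continuous linear
functional on `C(G, ℂ)`; its total variation norm is then the norm of the functional. -/
def fourierL {G : Type} [Group G] [TopologicalSpace G] [CompactSpace G]
    (μ : C(G, ℂ) →L[ℂ] ℂ) (ρ : Irrep G) : Matrix (Fin ρ.d) (Fin ρ.d) ℂ :=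
  Matrix.of fun i j =>
    μ ⟨fun g => star (ρ.mat g i j), continuous_star.comp (ρ.continuous_mat.matrix_elem i j)⟩

/-- The family `Λ = (π i)` is Sidon with constant `C`. -/
def Sidon {G : Type} [Group G] [TopologicalSpace G] {ι : Type}
    (π : ι → Irrep G) (C : ℝ) : Prop :=
  ∀ (s : Finset ι) (a : ∀ i, Matrix (Fin ((π i).d)) (Fin ((π i).d)) ℂ),
    ∑ i ∈ s, ((π i).d : ℝ) * traceAbs (a i) ≤
      C * ⨆ g : G, ‖∑ i ∈ s, ((π i).d : ℂ) * Matrix.trace ((π i).mat g * a i)‖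

/-- The family `Λ = (π i)` is randomly Sidon with constant `C`, with respect to the
Haar probability measure `m𝒢` on `𝒢 = ∏ U(d_i)`. -/
def RandomlySidonWith {G : Type} [Group G] [TopologicalSpace G] {ι : Type}
    (π : ι → Irrep G) (C : ℝ)
    (m𝒢 : Measure (∀ i, Matrix.unitaryGroup (Fin ((π i).d)) ℂ)) : Prop :=
  ∀ (s : Finset ι) (a : ∀ i, Matrix (Fin ((π i).d)) (Fin ((π i).d)) ℂ),
    ∑ i ∈ s, ((π i).d : ℝ) * traceAbs (a i) ≤
      C * ∫ u, (⨆ g : G,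
        ‖∑ i ∈ s, ((π i).d : ℂ) *
          Matrix.trace ((u i : Matrix (Fin ((π i).d)) (Fin ((π i).d)) ℂ) *
            (π i).mat g * a i)‖) ∂m𝒢

/-!
The peak measure is `ν = δ⁻¹ (μ - m_G)`. For a nontrivial irrep `ρ` the Haar average
`∫ ρ(g) v dm_G(g)` is a `ρ`-fixed vector by left invariance, hence zero by irreducibility, so
`m̂_G(ρ) = 0` and `ν̂(ρ) = δ⁻¹ μ̂(ρ)`; on the trivial irrep `μ̂ = m̂_G = 1` and `ν̂ = 0`.
The total variation bound is `‖ν‖ ≤ δ⁻¹ (‖μ‖ + ‖m_G‖) = 2/δ`.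
-/

namespace Irrep

variable {G : Type} [Group G] [TopologicalSpace G]

lemma mat_mul (ρ : Irrep G) (g h : G) : ρ.mat (g * h) = ρ.mat g * ρ.mat h := by
  simp only [mat, map_mul]
  rfl

lemma Equiv.refl (ρ : Irrep G) : ρ.Equiv ρ :=
  ⟨rfl, 1, one_mem _, fun g => by simp⟩

lemma isNontrivial_iff (ρ : Irrep G) : ρ.IsNontrivial ↔ ∃ g, ρ.mat g ≠ 1 := by
  simp only [IsNontrivial, mat, ne_eq, ← Subtype.coe_inj, OneMemClass.coe_one]

def fixedVectors (ρ : Irrep G) : Submodule ℂ (Fin ρ.d → ℂ) where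
  carrier := {v | ∀ g, ρ.mat g *ᵥ v = v}
  add_mem' hv hw g := by rw [mulVec_add, hv g, hw g]
  zero_mem' g := mulVec_zero _
  smul_mem' c v hv g := by rw [mulVec_smul, hv g]

lemma mem_fixedVectors {ρ : Irrep G} {v : Fin ρ.d → ℂ} :
    v ∈ ρ.fixedVectors ↔ ∀ g, ρ.mat g *ᵥ v = v :=
  Iff.rfl

lemma fixedVectors_eq_bot {ρ : Irrep G} (hρ : ρ.IsNontrivial) : ρ.fixedVectors = ⊥ := by
  refine (ρ.irreducible _ fun g v hv => ?_).resolve_right fun htop => ?_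
  · rw [← mat, mem_fixedVectors.1 hv g]
    exact hv
  · obtain ⟨g, hg⟩ := ρ.isNontrivial_iff.1 hρ
    refine hg (ext_of_mulVec_single fun j => ?_)
    rw [one_mulVec]
    exact (htop ▸ Submodule.mem_top : Pi.single j 1 ∈ ρ.fixedVectors) g

end Irrep

section Integration

variable {X : Type*} [TopologicalSpace X] [CompactSpace X] [MeasurableSpace X]
  [OpensMeasurableSpace X]

open BoundedContinuousFunction in
def integralCLM (μ : Measure X) [IsFiniteMeasure μ] : C(X, ℂ) →L[ℂ] ℂ :=
  LinearMap.mkContinuous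
    { toFun := fun f => ∫ x, f x ∂μ
      map_add' := fun f g =>
        integral_add ((mkOfCompact f).integrable μ) ((mkOfCompact g).integrable μ)
      map_smul' := fun c f => integral_smul c _ }
    (μ.real Set.univ) fun f => by simpa using (mkOfCompact f).norm_integral_le_mul_norm μ

lemma norm_integralCLM_le (μ : Measure X) [IsFiniteMeasure μ] :
    ‖integralCLM μ‖ ≤ μ.real Set.univ :=
  LinearMap.mkContinuous_norm_le _ measureReal_nonneg _

lemma norm_smul_integralCLM_sub_le (c : ℂ) (μ ν : Measure X) [IsProbabilityMeasure μ]
    [IsProbabilityMeasure ν] : ‖c • (integralCLM μ - integralCLM ν)‖ ≤ ‖c‖ * 2 :=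
  calc ‖c • (integralCLM μ - integralCLM ν)‖
      ≤ ‖c‖ * (‖integralCLM μ‖ + ‖integralCLM ν‖) := by
        rw [norm_smul]
        gcongr
        exact norm_sub_le _ _
    _ ≤ ‖c‖ * (1 + 1) := by
        gcongr <;> exact (norm_integralCLM_le _).trans_eq probReal_univ
    _ = ‖c‖ * 2 := by norm_num

end Integration

lemma fourierL_smul_integralCLM_sub {G : Type} [Group G] [TopologicalSpace G] [CompactSpace G]
    [MeasurableSpace G] [OpensMeasurableSpace G] (c : ℂ) (μ ν : Measure G) [IsFiniteMeasure μ]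
    [IsFiniteMeasure ν] (ρ : Irrep G) :
    fourierL (c • (integralCLM μ - integralCLM ν)) ρ = c • (fourierP μ ρ - fourierP ν ρ) :=
  rfl

section HaarAverage

variable {G : Type} [Group G] [TopologicalSpace G] [CompactSpace G] [MeasurableSpace G]
  [BorelSpace G] (μ : Measure G) [IsFiniteMeasure μ]

lemma Irrep.integrable_mat_mulVec (ρ : Irrep G) (v : Fin ρ.d → ℂ) :
    Integrable (fun g => ρ.mat g *ᵥ v) μ :=
  (ρ.continuous_mat.matrix_mulVec continuous_const).integrable_of_hasCompactSupport
    (HasCompactSupport.of_compactSpace _)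

lemma Irrep.integral_mat_mulVec_mem_fixedVectors [ContinuousMul G] [μ.IsMulLeftInvariant]
    (ρ : Irrep G) (v : Fin ρ.d → ℂ) : ∫ g, ρ.mat g *ᵥ v ∂μ ∈ ρ.fixedVectors := by
  refine mem_fixedVectors.2 fun h => ?_
  calc ρ.mat h *ᵥ ∫ g, ρ.mat g *ᵥ v ∂μ
      = ∫ g, ρ.mat h *ᵥ (ρ.mat g *ᵥ v) ∂μ :=
        ((ρ.mat h).mulVecLin.toContinuousLinearMap.integral_comp_comm
          (ρ.integrable_mat_mulVec μ v)).symm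
    _ = ∫ g, ρ.mat (h * g) *ᵥ v ∂μ := by simp only [mulVec_mulVec, mat_mul]
    _ = ∫ g, ρ.mat g *ᵥ v ∂μ := integral_mul_left_eq_self (fun g => ρ.mat g *ᵥ v) h

lemma fourierP_eq_zero_of_isNontrivial [ContinuousMul G] [μ.IsMulLeftInvariant] {ρ : Irrep G}
    (hρ : ρ.IsNontrivial) : fourierP μ ρ = 0 := by
  ext i j
  have hcol : ∫ g, ρ.mat g *ᵥ Pi.single j 1 ∂μ = 0 := by
    simpa [Irrep.fixedVectors_eq_bot hρ] using
      ρ.integral_mat_mulVec_mem_fixedVectors μ (Pi.single j 1)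
  have hentry := congrFun hcol i
  rw [eval_integral (ρ.integrable_mat_mulVec μ _).eval] at hentry
  simp only [mulVec_single_one, col_apply, Pi.zero_apply] at hentry
  simp only [fourierP, of_apply, Matrix.zero_apply]
  exact (integral_conj (f := fun g => ρ.mat g i j)).trans (by rw [hentry, map_zero])

end HaarAverage

lemma fourierP_eq_one_of_not_isNontrivial {G : Type} [Group G] [TopologicalSpace G]
    [MeasurableSpace G] (μ : Measure G) [IsProbabilityMeasure μ] {ρ : Irrep G}
    (hρ : ¬ ρ.IsNontrivial) : fourierP μ ρ = 1 := by
  rw [Irrep.isNontrivial_iff, not_exists_not] at hρ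
  ext i j
  simp [fourierP, hρ, Matrix.one_apply, apply_ite (star : ℂ → ℂ)]

lemma eq_zero_of_smul_eq_self {K M : Type*} [DivisionRing K] [AddCommGroup M] [Module K M]
    {c : K} {x : M} (hc : c ≠ 1) (h : c • x = x) : x = 0 :=
  (smul_eq_zero.1 (by rw [sub_smul, one_smul, h, sub_self] : (c - 1) • x = 0)).resolve_left
    (sub_ne_zero.2 hc)

lemma opNorm_zero {d : ℕ} : opNorm (0 : Matrix (Fin d) (Fin d) ℂ) = 0 := by
  simp [opNorm]

lemma opNorm_smul {d : ℕ} (c : ℂ) (A : Matrix (Fin d) (Fin d) ℂ) :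
    opNorm (c • A) = ‖c‖ * opNorm A := by
  simp [opNorm, norm_smul]

instance isProbabilityMeasure_haarMeasure_top {G : Type} [Group G] [TopologicalSpace G]
    [IsTopologicalGroup G] [CompactSpace G] [MeasurableSpace G] [BorelSpace G] :
    IsProbabilityMeasure (Measure.haarMeasure (⊤ : TopologicalSpace.PositiveCompacts G)) :=
  ⟨by simpa using Measure.haarMeasure_self (K₀ := (⊤ : TopologicalSpace.PositiveCompacts G))⟩

theorem isolated_implies_peak_general
    (G : Type) [Group G] [TopologicalSpace G] [IsTopologicalGroup G] [CompactSpace G]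
    [MeasurableSpace G] [BorelSpace G]
    (ι : Type) (π : ι → Irrep G)
    (γ δ : ℝ) (hγ : 0 < γ) (hγδ : γ < δ) (hδ : δ < 1)
    (μ : Measure G) [IsProbabilityMeasure μ]
    (hgap₁ : ∀ ρ : Irrep G, (∃ i, ρ.Equiv (π i)) →
      fourierP μ ρ = (δ : ℂ) • (1 : Matrix (Fin ρ.d) (Fin ρ.d) ℂ))
    (hgap₂ : ∀ ρ : Irrep G, ρ.IsNontrivial → (¬ ∃ i, ρ.Equiv (π i)) →
      opNorm (fourierP μ ρ) ≤ γ) :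
    ∃ ν : C(G, ℂ) →L[ℂ] ℂ, ‖ν‖ ≤ 2 / δ ∧
      (∀ i, fourierL ν (π i) = (1 : Matrix (Fin ((π i).d)) (Fin ((π i).d)) ℂ)) ∧
      ∀ ρ : Irrep G, (¬ ∃ i, ρ.Equiv (π i)) → opNorm (fourierL ν ρ) ≤ γ / δ := by
  have hδ₀ : 0 < δ := hγ.trans hγδ
  have hnorm : ‖(δ : ℂ)⁻¹‖ = δ⁻¹ := by simp [abs_of_pos hδ₀]
  set m := Measure.haarMeasure (⊤ : TopologicalSpace.PositiveCompacts G)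
  refine ⟨(δ : ℂ)⁻¹ • (integralCLM μ - integralCLM m), ?_, fun i => ?_, fun ρ hρ => ?_⟩
  · exact (norm_smul_integralCLM_sub_le _ μ m).trans_eq (by rw [hnorm]; ring)
  · have hδi := hgap₁ (π i) ⟨i, Irrep.Equiv.refl _⟩
    rw [fourierL_smul_integralCLM_sub, hδi]
    by_cases hi : (π i).IsNontrivial
    · rw [fourierP_eq_zero_of_isNontrivial m hi, sub_zero, smul_smul,
        inv_mul_cancel₀ (by exact_mod_cast hδ₀.ne'), one_smul]
    · -- a trivial irrep has `μ̂ = I`, so `δ ≠ 1` forces it to be zero-dimensional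
      rw [fourierP_eq_one_of_not_isNontrivial μ hi] at hδi
      have := subsingleton_iff_zero_eq_one.1
        (eq_zero_of_smul_eq_self (by exact_mod_cast hδ.ne) hδi.symm).symm
      exact Subsingleton.elim _ _
  · rw [fourierL_smul_integralCLM_sub, opNorm_smul, hnorm]
    by_cases hρ' : ρ.IsNontrivial
    · rw [fourierP_eq_zero_of_isNontrivial m hρ', sub_zero, div_eq_inv_mul]
      exact mul_le_mul_of_nonneg_left (hgap₂ ρ hρ' hρ) (inv_nonneg.2 hδ₀.le)
    · rw [fourierP_eq_one_of_not_isNontrivial μ hρ', fourierP_eq_one_of_not_isNontrivial m hρ',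
        sub_self, opNorm_zero, mul_zero]
      positivity

/-- If a probability measure `μ` on a compact group `G` has a `(δ,γ)`-spectral gap with
respect to a symmetric family `Λ` of pairwise inequivalent irreps (`0 < γ < δ < 1`), then
there is a complex Radon measure `ν` (encoded as a continuous linear functional on
`C(G,ℂ)`) of total variation norm at most `2/δ` with `ν̂(π) = I` for all `π ∈ Λ` and
`‖ν̂(ρ)‖ ≤ γ/δ` for every irrep `ρ` not equivalent to a member of `Λ` (including the
trivial one). -/
theorem isolated_implies_peak
    (G : Type) [Group G] [TopologicalSpace G] [IsTopologicalGroup G] [CompactSpace G]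
    [T2Space G] [MeasurableSpace G] [BorelSpace G]
    (ι : Type) (π : ι → Irrep G)
    (hpair : PairwiseInequiv π) (hsym : SymmetricFamily π)
    (γ δ : ℝ) (hγ : 0 < γ) (hγδ : γ < δ) (hδ : δ < 1)
    (μ : Measure G) [IsProbabilityMeasure μ]
    (hgap₁ : ∀ ρ : Irrep G, (∃ i, ρ.Equiv (π i)) →
      fourierP μ ρ = (δ : ℂ) • (1 : Matrix (Fin ρ.d) (Fin ρ.d) ℂ))
    (hgap₂ : ∀ ρ : Irrep G, ρ.IsNontrivial → (¬ ∃ i, ρ.Equiv (π i)) →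
      opNorm (fourierP μ ρ) ≤ γ) :
    ∃ ν : C(G, ℂ) →L[ℂ] ℂ, ‖ν‖ ≤ 2 / δ ∧
      (∀ i, fourierL ν (π i) = (1 : Matrix (Fin ((π i).d)) (Fin ((π i).d)) ℂ)) ∧
      ∀ ρ : Irrep G, (¬ ∃ i, ρ.Equiv (π i)) → opNorm (fourierL ν ρ) ≤ γ / δ :=
  isolated_implies_peak_general G ι π γ δ hγ hγδ hδ μ hgap₁ hgap₂
end
end

section
/- Let n > k ≥ 1 and let λ_1 ≥ λ_2 ≥ ⋯ ≥ λ_n = 0 be integers, and let 0 ≤ d ≤ λ_k. Let λ' be the partition (λ_1−d, …, λ_k−d) and λ'' the partition (λ_{k+1}, …, λ_n). Then the number of semistandard fillings of the skew shape λ∖[d]^k with entries in {1,…,n−k} is at most N(λ', n−k)·N(λ'', n−k), where N(μ, m) denotes the number of semistandard fillings of the (skew) shape μ with entries in {1,…,m}. Moreover, equality holds if λ_{k+1} ≤ d, and the number of semistandard fillings of λ∖[d]^k with entries in {1,…,n−k} equals 0 if d < λ_{n−k+1}. -/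
/-!
Cutting `λ ∖ [d]^k` between rows `k` and `k + 1` splits it into a top piece and a bottom piece,
which are translates of the shapes of `λ'` and `λ''`; translation does not change the number of
fillings. A filling is determined by its restrictions to the two pieces, which gives the
inequality. When `λ_{k+1} ≤ d` no cell of row `k + 1` lies below a cell of row `k`, so any two
fillings of the pieces glue to a filling of the whole shape. When `d < λ_{n-k+1}`, column `d + 1`
contains the `n - k + 1` cells of rows `1, …, n - k + 1`, whose strictly increasing entries cannot
all lie in `{1, …, n - k}`.
-/

noncomputable section

/-- A semistandard filling of the set `S` of cells, with entries in `{1, …, m}`: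
the filling vanishes outside `S`, takes values in `{1, …, m}` on `S`, is weakly
increasing along rows and strictly increasing down columns (within `S`). -/
def IsSSYT (S : Set (ℕ × ℕ)) (m : ℕ) (T : ℕ × ℕ → ℕ) : Prop :=
  (∀ c, c ∉ S → T c = 0) ∧
  (∀ c ∈ S, 1 ≤ T c ∧ T c ≤ m) ∧
  (∀ i j, (i, j) ∈ S → (i, j + 1) ∈ S → T (i, j) ≤ T (i, j + 1)) ∧
  (∀ i j, (i, j) ∈ S → (i + 1, j) ∈ S → T (i, j) < T (i + 1, j))

/-- The number of semistandard fillings of `S` with entries in `{1, …, m}`. -/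
def countSSYT (S : Set (ℕ × ℕ)) (m : ℕ) : ℕ := Nat.card {T // IsSSYT S m T}

/-- The cells of the (straight) shape of the partition `(μ 1, …, μ r)`;
rows and columns are indexed starting from `1`. -/
def straightShape (r : ℕ) (μ : ℕ → ℕ) : Set (ℕ × ℕ) :=
  {c | 1 ≤ c.1 ∧ c.1 ≤ r ∧ 1 ≤ c.2 ∧ c.2 ≤ μ c.1}

/-- The cells of the skew shape `λ ∖ [d]^k` (within `n` rows): in the first `k` rows the
columns run over `d < j ≤ λ_i`, and in the remaining rows over `1 ≤ j ≤ λ_i`. -/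
def skewShape (n k d : ℕ) (lam : ℕ → ℕ) : Set (ℕ × ℕ) :=
  {c | 1 ≤ c.1 ∧ c.1 ≤ n ∧
    ((c.1 ≤ k ∧ d < c.2 ∧ c.2 ≤ lam c.1) ∨ (k < c.1 ∧ 1 ≤ c.2 ∧ c.2 ≤ lam c.1))}

section Fillings

variable {S A B : Set (ℕ × ℕ)} {m : ℕ}

theorem finite_isSSYT (hS : S.Finite) : Finite {T // IsSSYT S m T} := by
  have := hS.to_subtype
  refine Finite.of_injective
    (fun T : {T // IsSSYT S m T} => fun c : S => (⟨T.1 c, by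
      have := T.2.2.1 c c.2; omega⟩ : Fin (m + 1))) fun T U h => Subtype.ext (funext fun c => ?_)
  by_cases hc : c ∈ S
  · exact congrArg Fin.val (congrFun h ⟨c, hc⟩)
  · rw [T.2.1 c hc, U.2.1 c hc]

theorem countSSYT_eq_zero_of_column {a j : ℕ} (h : ∀ i ≤ m, (a + i, j) ∈ S) :
    countSSYT S m = 0 := by
  have : IsEmpty {T // IsSSYT S m T} := by
    refine ⟨fun ⟨T, _, hbd, _, hcol⟩ => ?_⟩
    have hgrow : ∀ i ≤ m, i + 1 ≤ T (a + i, j) := by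
      intro i hi
      induction i with
      | zero => exact (hbd _ (h 0 hi)).1
      | succ i ih => exact (ih (by omega)).trans_lt (hcol _ _ (h i (by omega)) (h (i + 1) hi))
    have hlow := hgrow m le_rfl
    have hhigh := (hbd _ (h m le_rfl)).2
    omega
  exact Nat.card_of_isEmpty

theorem IsSSYT.indicator {T : ℕ × ℕ → ℕ} (hT : IsSSYT S m T) (hA : A ⊆ S) :
    IsSSYT A m (A.indicator T) := by
  obtain ⟨-, hbd, hrow, hcol⟩ := hT
  refine ⟨fun c hc => Set.indicator_of_notMem hc T, fun c hc => ?_, fun i j h₁ h₂ => ?_,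
    fun i j h₁ h₂ => ?_⟩
  · rw [Set.indicator_of_mem hc]; exact hbd c (hA hc)
  · rw [Set.indicator_of_mem h₁, Set.indicator_of_mem h₂]; exact hrow i j (hA h₁) (hA h₂)
  · rw [Set.indicator_of_mem h₁, Set.indicator_of_mem h₂]; exact hcol i j (hA h₁) (hA h₂)

theorem IsSSYT.add {TA TB : ℕ × ℕ → ℕ} (hTA : IsSSYT A m TA) (hTB : IsSSYT B m TB)
    (hAB : Disjoint A B)
    (hsepAB : ∀ i j, (i, j) ∈ A → (i, j + 1) ∉ B ∧ (i + 1, j) ∉ B)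
    (hsepBA : ∀ i j, (i, j) ∈ B → (i, j + 1) ∉ A ∧ (i + 1, j) ∉ A) :
    IsSSYT (A ∪ B) m (TA + TB) := by
  have onA : ∀ c ∈ A, (TA + TB) c = TA c := fun c hc => by
    rw [Pi.add_apply, hTB.1 c (Set.disjoint_left.1 hAB hc), add_zero]
  have onB : ∀ c ∈ B, (TA + TB) c = TB c := fun c hc => by
    rw [Pi.add_apply, hTA.1 c (Set.disjoint_right.1 hAB hc), zero_add]
  refine ⟨fun c hc => ?_, fun c hc => ?_, fun i j h₁ h₂ => ?_, fun i j h₁ h₂ => ?_⟩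
  · rw [Set.mem_union, not_or] at hc
    rw [Pi.add_apply, hTA.1 c hc.1, hTB.1 c hc.2]
  · rcases hc with hc | hc
    · rw [onA c hc]; exact hTA.2.1 c hc
    · rw [onB c hc]; exact hTB.2.1 c hc
  · rcases h₁ with h₁ | h₁ <;> rcases h₂ with h₂ | h₂
    · rw [onA _ h₁, onA _ h₂]; exact hTA.2.2.1 i j h₁ h₂
    · exact absurd h₂ (hsepAB i j h₁).1
    · exact absurd h₂ (hsepBA i j h₁).1
    · rw [onB _ h₁, onB _ h₂]; exact hTB.2.2.1 i j h₁ h₂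
  · rcases h₁ with h₁ | h₁ <;> rcases h₂ with h₂ | h₂
    · rw [onA _ h₁, onA _ h₂]; exact hTA.2.2.2 i j h₁ h₂
    · exact absurd h₂ (hsepAB i j h₁).2
    · exact absurd h₂ (hsepBA i j h₁).2
    · rw [onB _ h₁, onB _ h₂]; exact hTB.2.2.2 i j h₁ h₂

variable (A B m) in
def restrictPair (T : {T // IsSSYT (A ∪ B) m T}) :
    {T // IsSSYT A m T} × {T // IsSSYT B m T} :=
  (⟨A.indicator T, T.2.indicator Set.subset_union_left⟩,
    ⟨B.indicator T, T.2.indicator Set.subset_union_right⟩)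

theorem restrictPair_injective : Function.Injective (restrictPair A B m) := by
  intro T U h
  refine Subtype.ext (funext fun c => ?_)
  by_cases hA : c ∈ A
  · simpa only [restrictPair, Set.indicator_of_mem hA] using congrFun (congrArg (·.1.1) h) c
  by_cases hB : c ∈ B
  · simpa only [restrictPair, Set.indicator_of_mem hB] using congrFun (congrArg (·.2.1) h) c
  have hc : c ∉ A ∪ B := by simp [hA, hB]
  rw [T.2.1 c hc, U.2.1 c hc]

theorem restrictPair_surjective (hAB : Disjoint A B)
    (hsepAB : ∀ i j, (i, j) ∈ A → (i, j + 1) ∉ B ∧ (i + 1, j) ∉ B)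
    (hsepBA : ∀ i j, (i, j) ∈ B → (i, j + 1) ∉ A ∧ (i + 1, j) ∉ A) :
    Function.Surjective (restrictPair A B m) := by
  rintro ⟨⟨TA, hTA⟩, ⟨TB, hTB⟩⟩
  refine ⟨⟨TA + TB, hTA.add hTB hAB hsepAB hsepBA⟩, Prod.ext (Subtype.ext ?_) (Subtype.ext ?_)⟩
  · show A.indicator (TA + TB) = TA
    funext c
    by_cases hc : c ∈ A
    · rw [Set.indicator_of_mem hc, Pi.add_apply, hTB.1 c (Set.disjoint_left.1 hAB hc), add_zero]
    · rw [Set.indicator_of_notMem hc, hTA.1 c hc]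
  · show B.indicator (TA + TB) = TB
    funext c
    by_cases hc : c ∈ B
    · rw [Set.indicator_of_mem hc, Pi.add_apply, hTA.1 c (Set.disjoint_right.1 hAB hc), zero_add]
    · rw [Set.indicator_of_notMem hc, hTB.1 c hc]

theorem countSSYT_union_le [Finite {T // IsSSYT A m T}] [Finite {T // IsSSYT B m T}] :
    countSSYT (A ∪ B) m ≤ countSSYT A m * countSSYT B m :=
  (Nat.card_le_card_of_injective _ restrictPair_injective).trans_eq (Nat.card_prod _ _)

theorem countSSYT_union_eq (hAB : Disjoint A B)
    (hsepAB : ∀ i j, (i, j) ∈ A → (i, j + 1) ∉ B ∧ (i + 1, j) ∉ B)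
    (hsepBA : ∀ i j, (i, j) ∈ B → (i, j + 1) ∉ A ∧ (i + 1, j) ∉ A) :
    countSSYT (A ∪ B) m = countSSYT A m * countSSYT B m :=
  (Nat.card_congr (Equiv.ofBijective _
    ⟨restrictPair_injective, restrictPair_surjective hAB hsepAB hsepBA⟩)).trans (Nat.card_prod _ _)

end Fillings

section Shift

variable {S : Set (ℕ × ℕ)} {m a b : ℕ} {T : ℕ × ℕ → ℕ}

theorem IsSSYT.comp_add (hT : IsSSYT S m T) (a b : ℕ) :
    IsSSYT ((· + (a, b)) ⁻¹' S) m (T ∘ (· + (a, b))) := by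
  obtain ⟨hzero, hbd, hrow, hcol⟩ := hT
  refine ⟨fun c hc => hzero _ hc, fun c hc => hbd _ hc, fun i j h₁ h₂ => ?_, fun i j h₁ h₂ => ?_⟩
  · simp only [Set.mem_preimage, Prod.mk_add_mk, Function.comp_apply] at h₁ h₂ ⊢
    rw [add_right_comm] at h₂ ⊢
    exact hrow _ _ h₁ h₂
  · simp only [Set.mem_preimage, Prod.mk_add_mk, Function.comp_apply] at h₁ h₂ ⊢
    rw [add_right_comm] at h₂ ⊢
    exact hcol _ _ h₁ h₂

-- Without the guard, truncated subtraction would copy entries onto cells outside `S`.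
theorem IsSSYT.of_comp_add (hS : ∀ c ∈ S, a ≤ c.1 ∧ b ≤ c.2)
    (hT : IsSSYT ((· + (a, b)) ⁻¹' S) m T) :
    IsSSYT S m (fun c => if a ≤ c.1 ∧ b ≤ c.2 then T (c.1 - a, c.2 - b) else 0) := by
  obtain ⟨hzero, hbd, hrow, hcol⟩ := hT
  have mem_iff : ∀ c, a ≤ c.1 ∧ b ≤ c.2 → ((c.1 - a, c.2 - b) + (a, b) ∈ S ↔ c ∈ S) := by
    rintro ⟨i, j⟩ ⟨hi, hj⟩
    rw [Prod.mk_add_mk, Nat.sub_add_cancel hi, Nat.sub_add_cancel hj]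
  refine ⟨fun c hc => ?_, fun c hc => ?_, fun i j h₁ h₂ => ?_, fun i j h₁ h₂ => ?_⟩ <;> dsimp only
  · split_ifs with hc'
    · exact hzero _ fun h => hc ((mem_iff c hc').1 h)
    · rfl
  · rw [if_pos (hS c hc)]
    exact hbd _ ((mem_iff c (hS c hc)).2 hc)
  · obtain ⟨hi, hj⟩ : a ≤ i ∧ b ≤ j := hS _ h₁
    rw [if_pos ⟨hi, hj⟩, if_pos ⟨hi, hj.trans (Nat.le_succ j)⟩, Nat.sub_add_comm hj]
    exact hrow _ _ ((mem_iff _ ⟨hi, hj⟩).2 h₁) (by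
      rw [← Nat.sub_add_comm hj]; exact (mem_iff (i, j + 1) ⟨hi, by omega⟩).2 h₂)
  · obtain ⟨hi, hj⟩ : a ≤ i ∧ b ≤ j := hS _ h₁
    rw [if_pos ⟨hi, hj⟩, if_pos ⟨hi.trans (Nat.le_succ i), hj⟩, Nat.sub_add_comm hi]
    exact hcol _ _ ((mem_iff _ ⟨hi, hj⟩).2 h₁) (by
      rw [← Nat.sub_add_comm hi]; exact (mem_iff (i + 1, j) ⟨by omega, hj⟩).2 h₂)

theorem countSSYT_preimage_add (hS : ∀ c ∈ S, a ≤ c.1 ∧ b ≤ c.2) :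
    countSSYT ((· + (a, b)) ⁻¹' S) m = countSSYT S m :=
  Nat.card_congr
    { toFun := fun T => ⟨_, T.2.of_comp_add hS⟩
      invFun := fun T => ⟨_, T.2.comp_add a b⟩
      left_inv := fun T => Subtype.ext (funext fun c => by simp)
      right_inv := fun T => Subtype.ext (funext fun c => by
        by_cases hc : a ≤ c.1 ∧ b ≤ c.2
        · simp [hc]
        · simp only [hc, if_false]
          exact (T.2.1 c fun h => hc (hS c h)).symm) }

end Shift

section Skew

variable {n k d : ℕ} {lam : ℕ → ℕ}

def skewTop (n k d : ℕ) (lam : ℕ → ℕ) : Set (ℕ × ℕ) := {c ∈ skewShape n k d lam | c.1 ≤ k}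

def skewBottom (n k d : ℕ) (lam : ℕ → ℕ) : Set (ℕ × ℕ) := {c ∈ skewShape n k d lam | k < c.1}

theorem skewShape_eq_skewTop_union_skewBottom :
    skewShape n k d lam = skewTop n k d lam ∪ skewBottom n k d lam := by
  ext c
  simp only [skewTop, skewBottom, Set.mem_union, Set.mem_sep_iff]
  have := le_or_gt c.1 k
  tauto

theorem disjoint_skewTop_skewBottom : Disjoint (skewTop n k d lam) (skewBottom n k d lam) :=
  Set.disjoint_left.2 fun _ htop hbot => hbot.2.not_ge htop.2

theorem skewShape_finite (n k d : ℕ) (lam : ℕ → ℕ) : (skewShape n k d lam).Finite := by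
  refine ((Set.finite_Iic n).biUnion fun i _ =>
    (Set.finite_Iic (lam i)).image (Prod.mk i)).subset ?_
  rintro ⟨i, j⟩ ⟨-, hin, hj⟩
  dsimp only at hin hj
  exact Set.mem_biUnion (x := i) hin ⟨j, by simp only [Set.mem_Iic]; omega, rfl⟩

theorem straightShape_eq_preimage_skewTop (hkn : k ≤ n) :
    straightShape k (fun i => lam i - d) = (· + (0, d)) ⁻¹' skewTop n k d lam := by
  ext ⟨i, j⟩
  simp only [straightShape, skewTop, skewShape, Set.mem_preimage, Prod.mk_add_mk,
    Set.mem_ofPred_eq, add_zero]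
  omega

theorem straightShape_eq_preimage_skewBottom :
    straightShape (n - k) (fun i => lam (k + i)) = (· + (k, 0)) ⁻¹' skewBottom n k d lam := by
  ext ⟨i, j⟩
  simp only [straightShape, skewBottom, skewShape, Set.mem_preimage, Prod.mk_add_mk,
    Set.mem_ofPred_eq, add_zero, add_comm k i]
  omega

theorem countSSYT_skewTop (hkn : k ≤ n) (m : ℕ) :
    countSSYT (skewTop n k d lam) m = countSSYT (straightShape k (fun i => lam i - d)) m := by
  rw [straightShape_eq_preimage_skewTop hkn, countSSYT_preimage_add]
  exact fun c hc =>
    ⟨Nat.zero_le _, hc.1.2.2.elim (fun h => h.2.1.le) fun h => absurd hc.2 h.1.not_ge⟩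

theorem countSSYT_skewBottom (m : ℕ) :
    countSSYT (skewBottom n k d lam) m =
      countSSYT (straightShape (n - k) (fun i => lam (k + i))) m := by
  rw [straightShape_eq_preimage_skewBottom, countSSYT_preimage_add]
  exact fun c hc => ⟨hc.2.le, Nat.zero_le _⟩

theorem skewTop_separated (hsplit : lam (k + 1) ≤ d) (i j : ℕ) (h : (i, j) ∈ skewTop n k d lam) :
    (i, j + 1) ∉ skewBottom n k d lam ∧ (i + 1, j) ∉ skewBottom n k d lam := by
  obtain ⟨⟨-, -, hrow⟩, hik⟩ := h
  refine ⟨fun h' => h'.2.not_ge hik, fun ⟨⟨_, _, hrow'⟩, hki⟩ => ?_⟩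
  obtain rfl : i = k := by omega
  dsimp only at hrow hrow'
  omega

theorem skewBottom_separated (i j : ℕ) (h : (i, j) ∈ skewBottom n k d lam) :
    (i, j + 1) ∉ skewTop n k d lam ∧ (i + 1, j) ∉ skewTop n k d lam :=
  ⟨fun h' => h'.2.not_gt h.2, fun h' => h'.2.not_gt (h.2.trans (Nat.lt_succ_self i))⟩

theorem skewShape_column (hk : 1 ≤ k) (hkn : k < n)
    (hmono : ∀ i, 1 ≤ i → i < n → lam (i + 1) ≤ lam i) (hd : d < lam (n - k + 1)) :
    ∀ i ≤ n - k, (1 + i, d + 1) ∈ skewShape n k d lam := by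
  have hanti : AntitoneOn lam (Set.Icc 1 n) :=
    antitoneOn_of_succ_le Set.ordConnected_Icc fun a _ ha hb => by
      rw [Order.succ_eq_add_one] at hb ⊢
      exact hmono a ha.1 hb.2
  intro i hi
  have : lam (n - k + 1) ≤ lam (1 + i) :=
    hanti ⟨by omega, by omega⟩ ⟨by omega, by omega⟩ (by omega)
  simp only [skewShape, Set.mem_ofPred_eq]
  omega

end Skew

theorem skew_filling_count_general (n k d : ℕ) (lam : ℕ → ℕ)
    (hk : 1 ≤ k) (hkn : k < n)
    (hmono : ∀ i, 1 ≤ i → i < n → lam (i + 1) ≤ lam i) :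
    (countSSYT (skewShape n k d lam) (n - k) ≤
      countSSYT (straightShape k (fun i => lam i - d)) (n - k) *
        countSSYT (straightShape (n - k) (fun i => lam (k + i))) (n - k)) ∧
    (lam (k + 1) ≤ d →
      countSSYT (skewShape n k d lam) (n - k) =
        countSSYT (straightShape k (fun i => lam i - d)) (n - k) *
          countSSYT (straightShape (n - k) (fun i => lam (k + i))) (n - k)) ∧
    (d < lam (n - k + 1) → countSSYT (skewShape n k d lam) (n - k) = 0) := by
  rw [← countSSYT_skewTop hkn.le, ← countSSYT_skewBottom (d := d),
    skewShape_eq_skewTop_union_skewBottom]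
  have : Finite {T // IsSSYT (skewTop n k d lam) (n - k) T} :=
    finite_isSSYT ((skewShape_finite n k d lam).subset (Set.sep_subset _ _))
  have : Finite {T // IsSSYT (skewBottom n k d lam) (n - k) T} :=
    finite_isSSYT ((skewShape_finite n k d lam).subset (Set.sep_subset _ _))
  refine ⟨countSSYT_union_le, fun hsplit => countSSYT_union_eq disjoint_skewTop_skewBottom
    (skewTop_separated hsplit) skewBottom_separated, fun hd => ?_⟩
  rw [← skewShape_eq_skewTop_union_skewBottom]
  exact countSSYT_eq_zero_of_column (skewShape_column hk hkn hmono hd)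

/-- The number of semistandard fillings of `λ ∖ [d]^k` by `{1, …, n-k}` is at most
`N(λ', n-k) · N(λ'', n-k)` where `λ' = (λ_1 - d, …, λ_k - d)` and
`λ'' = (λ_{k+1}, …, λ_n)`; equality holds when `λ_{k+1} ≤ d`, and the count vanishes
when `d < λ_{n-k+1}`. -/
theorem skew_filling_count (n k d : ℕ) (lam : ℕ → ℕ)
    (hk : 1 ≤ k) (hkn : k < n)
    (hmono : ∀ i, 1 ≤ i → i < n → lam (i + 1) ≤ lam i)
    (hlast : lam n = 0) (hd : d ≤ lam k) :
    (countSSYT (skewShape n k d lam) (n - k) ≤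
      countSSYT (straightShape k (fun i => lam i - d)) (n - k) *
        countSSYT (straightShape (n - k) (fun i => lam (k + i))) (n - k)) ∧
    (lam (k + 1) ≤ d →
      countSSYT (skewShape n k d lam) (n - k) =
        countSSYT (straightShape k (fun i => lam i - d)) (n - k) *
          countSSYT (straightShape (n - k) (fun i => lam (k + i))) (n - k)) ∧
    (d < lam (n - k + 1) → countSSYT (skewShape n k d lam) (n - k) = 0) :=
  skew_filling_count_general n k d lam hk hkn hmono

end
end

section
/- Let n > k ≥ 1 and let λ_1 ≥ λ_2 ≥ ⋯ ≥ λ_n ≥ 0 be integers with λ_{n−k+1} = 0 and λ_1 ≥ 2. Then ∏ (λ_i + j − i)/(j − i), the product taken over all pairs (i,j) with 1 ≤ i < j ≤ n and j > n−k, is at least n(n+1)/((n−k)(n−k+1)). -/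
/-!
Every factor is at least `1`, so the product is at least the product of the factors with
`i = 1`. Since `λ_1 ≥ 2`, the factor at `(1, j)` is at least `(j + 1)/(j - 1)`, and the product of
these over `n - k < j ≤ n` telescopes to `n(n+1)/((n-k)(n-k+1))`.
-/

open Finset

theorem prod_Icc_succ_div_pred {K : Type*} [Field K] [CharZero K] {m n : ℕ}
    (hm : 1 ≤ m) (hmn : m ≤ n) :
    ∏ j ∈ Icc (m + 1) n, ((j : K) + 1) / ((j : K) - 1) = (n * (n + 1)) / (m * (m + 1)) := by
  have hm0 : (m : K) ≠ 0 := Nat.cast_ne_zero.mpr (by omega)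
  have hm1 : (m : K) + 1 ≠ 0 := by exact_mod_cast m.succ_ne_zero
  induction n, hmn using Nat.le_induction with
  | base => rw [Icc_eq_empty (by omega), prod_empty, div_self (mul_ne_zero hm0 hm1)]
  | succ n hmn ih =>
    have hn : (n : K) ≠ 0 := Nat.cast_ne_zero.mpr (by omega)
    rw [prod_Icc_succ_top (by omega), ih]
    push_cast
    rw [add_sub_cancel_right]
    field_simp

def weylFactor (lam : ℕ → ℕ) (p : ℕ × ℕ) : ℚ :=
  ((lam p.1 : ℚ) + p.2 - p.1) / (p.2 - p.1)

theorem one_le_weylFactor (lam : ℕ → ℕ) {p : ℕ × ℕ} (hp : p.1 < p.2) :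
    1 ≤ weylFactor lam p := by
  have hden : (0 : ℚ) < p.2 - p.1 := sub_pos.mpr (by exact_mod_cast hp)
  rw [weylFactor, one_le_div hden]
  linarith [(lam p.1).cast_nonneg (α := ℚ)]

theorem succ_div_pred_le_weylFactor {lam : ℕ → ℕ} (h2 : 2 ≤ lam 1) {j : ℕ} (hj : 1 < j) :
    ((j : ℚ) + 1) / ((j : ℚ) - 1) ≤ weylFactor lam (1, j) := by
  have hden : (0 : ℚ) < j - 1 := sub_pos.mpr (by exact_mod_cast hj)
  rw [weylFactor, Nat.cast_one, div_le_div_iff_of_pos_right hden]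
  linarith [(Nat.ofNat_le_cast (α := ℚ)).mpr h2]

theorem weyl_product_bound_d_zero_general (n k : ℕ) (lam : ℕ → ℕ)
    (hkn : k < n)
    (h2 : 2 ≤ lam 1) :
    ((n : ℚ) * ((n : ℚ) + 1)) / (((n : ℚ) - (k : ℚ)) * ((n : ℚ) - (k : ℚ) + 1)) ≤
      ∏ p ∈ (Finset.Icc 1 n ×ˢ Finset.Icc 1 n).filter
          (fun p : ℕ × ℕ => p.1 < p.2 ∧ n - k < p.2),
        (((lam p.1 : ℚ) + (p.2 : ℚ) - (p.1 : ℚ)) / ((p.2 : ℚ) - (p.1 : ℚ))) := by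
  have hm : 1 ≤ n - k := by omega
  have hsub : {1} ×ˢ Icc (n - k + 1) n ⊆ (Icc 1 n ×ˢ Icc 1 n).filter
      (fun p : ℕ × ℕ => p.1 < p.2 ∧ n - k < p.2) := by
    intro p hp
    simp only [mem_product, mem_singleton, mem_Icc, mem_filter] at hp ⊢
    omega
  rw [← Nat.cast_sub hkn.le, ← prod_Icc_succ_div_pred hm (Nat.sub_le n k)]
  change _ ≤ ∏ p ∈ _, weylFactor lam p
  calc ∏ j ∈ Icc (n - k + 1) n, ((j : ℚ) + 1) / ((j : ℚ) - 1)
      ≤ ∏ j ∈ Icc (n - k + 1) n, weylFactor lam (1, j) := by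
        refine prod_le_prod (fun j hj => ?_) (fun j hj => ?_)
        · have hj1 : (1 : ℚ) < j := by exact_mod_cast (by grind : 1 < j)
          exact div_nonneg (by linarith) (by linarith)
        · exact succ_div_pred_le_weylFactor h2 (by grind)
    _ = ∏ p ∈ {1} ×ˢ Icc (n - k + 1) n, weylFactor lam p := by
        rw [prod_product, prod_singleton]
    _ ≤ _ := prod_le_prod_of_subset_of_one_le hsub
        (fun p hp => zero_le_one.trans (one_le_weylFactor lam (mem_filter.mp (hsub hp)).2.1))
        (fun p hp _ => one_le_weylFactor lam (mem_filter.mp hp).2.1)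

/-- Weyl dimension-type estimate: if `λ_1 ≥ λ_2 ≥ ⋯ ≥ λ_n ≥ 0` with
`λ_{n-k+1} = 0` and `λ_1 ≥ 2` (`1 ≤ k < n`), then
`∏_{1 ≤ i < j ≤ n, j > n-k} (λ_i + j - i)/(j - i) ≥ n(n+1)/((n-k)(n-k+1))`. -/
theorem weyl_product_bound_d_zero (n k : ℕ) (lam : ℕ → ℕ)
    (hk : 1 ≤ k) (hkn : k < n)
    (hmono : ∀ i, 1 ≤ i → i < n → lam (i + 1) ≤ lam i)
    (hzero : lam (n - k + 1) = 0) (h2 : 2 ≤ lam 1) :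
    ((n : ℚ) * ((n : ℚ) + 1)) / (((n : ℚ) - (k : ℚ)) * ((n : ℚ) - (k : ℚ) + 1)) ≤
      ∏ p ∈ (Finset.Icc 1 n ×ˢ Finset.Icc 1 n).filter
          (fun p : ℕ × ℕ => p.1 < p.2 ∧ n - k < p.2),
        (((lam p.1 : ℚ) + (p.2 : ℚ) - (p.1 : ℚ)) / ((p.2 : ℚ) - (p.1 : ℚ))) :=
  weyl_product_bound_d_zero_general n k lam hkn h2
end

section
/- Let n > k ≥ 1 and let λ_1 ≥ λ_2 ≥ ⋯ ≥ λ_n = 0 be integers with λ_k = 1, λ_1 ≥ 2 and λ_{n−1} ≥ 1. Then ∏ (λ_i − λ_j + j − i)/(j − i), the product taken over all pairs (i,j) with 1 ≤ i ≤ k < j ≤ n, is at least (n+1)(n−1)/(k(n−k)). -/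
lemma tele_aux (f : ℕ → ℚ) (a : ℕ) (ha : 1 ≤ a) (b : ℕ) (hb : a - 1 ≤ b)
    (hne : ∀ i, a - 1 ≤ i → i ≤ b → f i ≠ 0) :
    ∏ i ∈ Finset.Icc a b, (f i / f (i - 1)) = f b / f (a - 1) := by
  induction b, hb using Nat.le_induction with
  | base =>
    rw [Finset.Icc_eq_empty (by omega)]
    simp [div_self (hne _ le_rfl le_rfl)]
  | succ b hb ih =>
    rw [Finset.prod_Icc_succ_top (by omega : a ≤ b + 1),
      ih (fun i h1 h2 => hne i h1 (by omega))]
    have hb' : f b ≠ 0 := hne b hb (by omega)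
    have ha' : f (a - 1) ≠ 0 := hne _ le_rfl (by omega)
    simp only [Nat.add_sub_cancel]
    field_simp

/-- Weyl dimension-type estimate: if `λ_1 ≥ λ_2 ≥ ⋯ ≥ λ_n = 0` with `λ_k = 1`,
`λ_1 ≥ 2` and `λ_{n-1} ≥ 1` (`1 ≤ k < n`), then
`∏_{1 ≤ i ≤ k < j ≤ n} (λ_i - λ_j + j - i)/(j - i) ≥ (n+1)(n-1)/(k(n-k))`. -/
theorem weyl_product_bound_lambda_k_eq_one (n k : ℕ) (lam : ℕ → ℕ)
    (hk : 1 ≤ k) (hkn : k < n)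
    (hmono : ∀ i, 1 ≤ i → i < n → lam (i + 1) ≤ lam i)
    (hlast : lam n = 0) (hlamk : lam k = 1) (hlam1 : 2 ≤ lam 1)
    (hlamn1 : 1 ≤ lam (n - 1)) :
    (((n : ℚ) + 1) * ((n : ℚ) - 1)) / ((k : ℚ) * ((n : ℚ) - (k : ℚ))) ≤
      ∏ p ∈ Finset.Icc 1 k ×ˢ Finset.Icc (k + 1) n,
        (((lam p.1 : ℚ) - (lam p.2 : ℚ) + (p.2 : ℚ) - (p.1 : ℚ)) /
          ((p.2 : ℚ) - (p.1 : ℚ))) := by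
  set f : ℕ × ℕ → ℚ := fun p =>
    (((lam p.1 : ℚ) - (lam p.2 : ℚ) + (p.2 : ℚ) - (p.1 : ℚ)) /
      ((p.2 : ℚ) - (p.1 : ℚ))) with hf
  -- basic arithmetic facts
  have anti : ∀ i j, 1 ≤ i → i ≤ j → j ≤ n → lam j ≤ lam i := by
    intro i j h1 hij hjn
    induction j, hij using Nat.le_induction with
    | base => exact le_rfl
    | succ j hij ih => exact le_trans (hmono j (by omega) (by omega)) (ih (by omega))
  have hk2 : 2 ≤ k := by
    rcases Nat.lt_or_ge k 2 with h | h
    · interval_cases k <;> omega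
    · exact h
  have hn3 : 3 ≤ n := by omega
  have hlamge1 : ∀ i, 1 ≤ i → i ≤ k → 1 ≤ lam i := by
    intro i h1 h2
    have := anti i k h1 h2 (by omega)
    omega
  have hlameq1 : ∀ j, k ≤ j → j ≤ n - 1 → lam j = 1 := by
    intro j h1 h2
    have h3 := anti k j (by omega) h1 (by omega)
    have h4 := anti j (n - 1) (by omega) h2 (by omega)
    omega
  -- the index sets
  set T := Finset.Icc 1 k ×ˢ Finset.Icc (k + 1) n with hT
  set S1 := ({1} : Finset ℕ) ×ˢ Finset.Icc (k + 1) (n - 1) with hS1def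
  set S2 := ({((1 : ℕ), n)} : Finset (ℕ × ℕ)) with hS2def
  set S3 := Finset.Icc 2 k ×ˢ ({n} : Finset ℕ) with hS3def
  set S := S1 ∪ S2 ∪ S3 with hSdef
  have hmemS1 : ∀ p : ℕ × ℕ, p ∈ S1 ↔ p.1 = 1 ∧ k + 1 ≤ p.2 ∧ p.2 ≤ n - 1 := by
    intro p
    simp only [hS1def, Finset.mem_product, Finset.mem_singleton, Finset.mem_Icc]
  have hmemS3 : ∀ p : ℕ × ℕ, p ∈ S3 ↔ (2 ≤ p.1 ∧ p.1 ≤ k) ∧ p.2 = n := by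
    intro p
    simp only [hS3def, Finset.mem_product, Finset.mem_singleton, Finset.mem_Icc]
  have hmemT : ∀ p : ℕ × ℕ, p ∈ T ↔ (1 ≤ p.1 ∧ p.1 ≤ k) ∧ (k + 1 ≤ p.2 ∧ p.2 ≤ n) := by
    intro p; simp [hT, Finset.mem_product]
  have hsub : S ⊆ T := by
    intro p hp
    rw [hmemT]
    simp only [hSdef, Finset.mem_union, hmemS1 p, hmemS3 p, hS2def, Finset.mem_singleton] at hp
    rcases hp with (h | h) | h
    · omega
    · have : p.1 = 1 ∧ p.2 = n := Prod.mk_inj.mp (by simpa using h)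
      omega
    · omega
  -- each factor on T is at least 1
  have hone : ∀ p ∈ T, (1 : ℚ) ≤ f p := by
    intro p hp
    rw [hmemT] at hp
    have hlle : lam p.2 ≤ lam p.1 := anti p.1 p.2 (by omega) (by omega) (by omega)
    have hd : (0 : ℚ) < (p.2 : ℚ) - (p.1 : ℚ) := by
      have : p.1 < p.2 := by omega
      have := (Nat.cast_lt (α := ℚ)).mpr this
      linarith
    rw [hf, le_div_iff₀ hd]
    have : (lam p.2 : ℚ) ≤ (lam p.1 : ℚ) := Nat.cast_le.mpr hlle
    linarith
  -- S1 part
  have hS1bound : ((n : ℚ) - 1) / (k : ℚ) ≤ ∏ p ∈ S1, f p := by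
    have hrw : ∏ p ∈ S1, f p = ∏ j ∈ Finset.Icc (k + 1) (n - 1), f (1, j) := by
      rw [hS1def, Finset.prod_product]
      simp
    rw [hrw]
    have htel : ∏ j ∈ Finset.Icc (k + 1) (n - 1), ((j : ℚ) / ((j : ℚ) - 1))
        = ((n : ℚ) - 1) / (k : ℚ) := by
      have := tele_aux (fun i => (i : ℚ)) (k + 1) (by omega) (n - 1) (by omega)
        (fun i h1 h2 => by
          have : 1 ≤ i := by omega
          exact_mod_cast Nat.cast_ne_zero.mpr (by omega))
      rw [Finset.prod_congr rfl (fun j hj => ?_)] at this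
      · rw [this]
        simp only [Nat.add_sub_cancel]
        rw [Nat.cast_sub (by omega : 1 ≤ n)]
        norm_num
      · simp only [Finset.mem_Icc] at hj
        show (j : ℚ) / ((j - 1 : ℕ) : ℚ) = (j : ℚ) / ((j : ℚ) - 1)
        rw [Nat.cast_sub (by omega : 1 ≤ j)]
        norm_num
    rw [← htel]
    apply Finset.prod_le_prod
    · intro j hj
      simp only [Finset.mem_Icc] at hj
      have h3 : (3 : ℚ) ≤ (j : ℚ) := by exact_mod_cast (by omega : 3 ≤ j)
      have h1 : (0 : ℚ) < (j : ℚ) - 1 := by linarith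
      positivity
    · intro j hj
      simp only [Finset.mem_Icc] at hj
      have hj1 : lam j = 1 := hlameq1 j (by omega) (by omega)
      have hjq : (3 : ℚ) ≤ (j : ℚ) := by exact_mod_cast (by omega : 3 ≤ j)
      have hl1 : (2 : ℚ) ≤ (lam 1 : ℚ) := by exact_mod_cast hlam1
      rw [hf]
      simp only [hj1]
      push_cast
      rw [div_le_div_iff₀ (by linarith) (by linarith)]
      nlinarith
  -- S2 part
  have hS2bound : ((n : ℚ) + 1) / ((n : ℚ) - 1) ≤ f (1, n) := by
    rw [hf]
    simp only [hlast]
    push_cast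
    have hn : (3 : ℚ) ≤ (n : ℚ) := by exact_mod_cast hn3
    have hl1 : (2 : ℚ) ≤ (lam 1 : ℚ) := by exact_mod_cast hlam1
    rw [div_le_div_iff₀ (by linarith) (by linarith)]
    nlinarith
  -- S3 part
  have hkq : (k : ℚ) < (n : ℚ) := by exact_mod_cast hkn
  have hS3bound : ((n : ℚ) - 1) / ((n : ℚ) - (k : ℚ)) ≤ ∏ p ∈ S3, f p := by
    have hrw : ∏ p ∈ S3, f p = ∏ i ∈ Finset.Icc 2 k, f (i, n) := by
      rw [hS3def, Finset.prod_product]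
      simp
    rw [hrw]
    have htel : ∏ i ∈ Finset.Icc 2 k, (((n : ℚ) - (i : ℚ) + 1) / ((n : ℚ) - (i : ℚ)))
        = ((n : ℚ) - 1) / ((n : ℚ) - (k : ℚ)) := by
      have hne : ∀ i, 2 - 1 ≤ i → i ≤ k → (fun i : ℕ => 1 / ((n : ℚ) - (i : ℚ))) i ≠ 0 := by
        intro i h1 h2
        have : (i : ℚ) < (n : ℚ) := by exact_mod_cast (by omega : i < n)
        exact one_div_ne_zero (by linarith)
      have := tele_aux (fun i : ℕ => 1 / ((n : ℚ) - (i : ℚ))) 2 (by omega) k (by omega) hne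
      rw [Finset.prod_congr rfl (fun j hj => ?_)] at this
      · rw [this]
        norm_num
        rw [div_eq_mul_inv]
        ring
      · simp only [Finset.mem_Icc] at hj
        have hjq : (j : ℚ) < (n : ℚ) := by exact_mod_cast (by omega : j < n)
        have hjq1 : ((j - 1 : ℕ) : ℚ) = (j : ℚ) - 1 := by
          rw [Nat.cast_sub (by omega : 1 ≤ j)]; norm_num
        show 1 / ((n : ℚ) - (j : ℚ)) / (1 / ((n : ℚ) - ((j - 1 : ℕ) : ℚ)))
            = ((n : ℚ) - (j : ℚ) + 1) / ((n : ℚ) - (j : ℚ))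
        rw [hjq1]
        have h1 : (n : ℚ) - (j : ℚ) ≠ 0 := by linarith
        have h2 : (n : ℚ) - ((j : ℚ) - 1) ≠ 0 := by linarith
        field_simp
        ring
    rw [← htel]
    apply Finset.prod_le_prod
    · intro i hi
      simp only [Finset.mem_Icc] at hi
      have : (i : ℚ) < (n : ℚ) := by exact_mod_cast (by omega : i < n)
      have h1 : (0 : ℚ) < (n : ℚ) - (i : ℚ) := by linarith
      positivity
    · intro i hi
      simp only [Finset.mem_Icc] at hi
      have hi1 : 1 ≤ lam i := hlamge1 i (by omega) hi.2
      have hiq : (i : ℚ) < (n : ℚ) := by exact_mod_cast (by omega : i < n)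
      have hl1 : (1 : ℚ) ≤ (lam i : ℚ) := by exact_mod_cast hi1
      rw [hf]
      simp only [hlast]
      push_cast
      rw [div_le_div_iff₀ (by linarith) (by linarith)]
      nlinarith
  -- positivity of the pieces
  have hkq0 : (0 : ℚ) < (k : ℚ) := by exact_mod_cast (by omega : 0 < k)
  have hnq1 : (0 : ℚ) < (n : ℚ) - 1 := by
    have : (1 : ℚ) < (n : ℚ) := by exact_mod_cast (by omega : 1 < n)
    linarith
  have hnk0 : (0 : ℚ) < (n : ℚ) - (k : ℚ) := by linarith
  have hA : (0 : ℚ) < ((n : ℚ) - 1) / (k : ℚ) := by positivity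
  have hB : (0 : ℚ) < ((n : ℚ) + 1) / ((n : ℚ) - 1) := by positivity
  have hC : (0 : ℚ) < ((n : ℚ) - 1) / ((n : ℚ) - (k : ℚ)) := by positivity
  -- product over S
  have hdisj12 : Disjoint S1 S2 := by
    rw [Finset.disjoint_left]
    intro p hp hp'
    rw [hmemS1] at hp
    rw [hS2def, Finset.mem_singleton] at hp'
    have : p.2 = n := by rw [hp']
    omega
  have hdisj123 : Disjoint (S1 ∪ S2) S3 := by
    rw [Finset.disjoint_left]
    intro p hp hp'
    rw [hmemS3] at hp'
    rcases Finset.mem_union.mp hp with h | h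
    · rw [hmemS1] at h; omega
    · rw [hS2def, Finset.mem_singleton] at h
      have : p.1 = 1 := by rw [h]
      omega
  have hprodS : ∏ p ∈ S, f p = (∏ p ∈ S1, f p) * f (1, n) * ∏ p ∈ S3, f p := by
    rw [hSdef, Finset.prod_union hdisj123, Finset.prod_union hdisj12, hS2def,
      Finset.prod_singleton]
  have hSbound : (((n : ℚ) + 1) * ((n : ℚ) - 1)) / ((k : ℚ) * ((n : ℚ) - (k : ℚ)))
      ≤ ∏ p ∈ S, f p := by
    rw [hprodS]
    have heq : (((n : ℚ) + 1) * ((n : ℚ) - 1)) / ((k : ℚ) * ((n : ℚ) - (k : ℚ)))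
        = (((n : ℚ) - 1) / (k : ℚ)) * (((n : ℚ) + 1) / ((n : ℚ) - 1))
          * (((n : ℚ) - 1) / ((n : ℚ) - (k : ℚ))) := by
      field_simp
    rw [heq]
    have h12 : (((n : ℚ) - 1) / (k : ℚ)) * (((n : ℚ) + 1) / ((n : ℚ) - 1))
        ≤ (∏ p ∈ S1, f p) * f (1, n) :=
      mul_le_mul hS1bound hS2bound hB.le (le_trans hA.le hS1bound)
    exact mul_le_mul h12 hS3bound hC.le (le_trans (mul_pos hA hB).le h12)
  -- extend to the full product
  have hTS : ∏ p ∈ S, f p ≤ ∏ p ∈ T, f p := by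
    rw [← Finset.prod_sdiff hsub]
    have h1 : (1 : ℚ) ≤ ∏ p ∈ T \ S, f p := by
      calc (1 : ℚ) = ∏ _p ∈ T \ S, (1 : ℚ) := by simp
        _ ≤ ∏ p ∈ T \ S, f p := Finset.prod_le_prod (by simp)
            (fun p hp => hone p (Finset.mem_sdiff.mp hp).1)
    have h2 : (0 : ℚ) ≤ ∏ p ∈ S, f p := le_trans (by positivity) hSbound
    calc ∏ p ∈ S, f p = 1 * ∏ p ∈ S, f p := by ring
      _ ≤ (∏ p ∈ T \ S, f p) * ∏ p ∈ S, f p := mul_le_mul_of_nonneg_right h1 h2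
  exact le_trans hSbound hTS
end
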